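/- Let c > 1/2, C* > 0, and t* ≥ 1. There exists a time-independent constant K > 0 such that for all t ≥ t*, the quantity I₈(t) := t^{−4c} · ∫_{u=t*}^{t} ∫_{s=u}^{t} ∫_{w=s}^{t} ∫_{r=w}^{t} r^{c−2} · u^{c−1} · w^{c−2} · s^{c−2} · e^{−C* r + C* u} dr dw ds du satisfies: I₈(t) ≤ K/t⁶ if c > 3/2; I₈(t) ≤ K(1 + log t)/t⁶ if c = 3/2; and I₈(t) ≤ K/t^{4c} if 1/2 < c < 3/2. -/

import Mathlib

/-!
After pulling the factor `u ^ (c - 1) * exp (C u)` out of the three inner integrals, `I₈` becomes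
`t ^ (-4c) ∫ u^(c-1) e^(Cu) N(u) du`, where `N` is the iterated integral of
`s^(c-2) w^(c-2) r^(c-2) e^(-Cr)` over `u ≤ s ≤ w ≤ r ≤ t`. Bounding each power `y ^ (c - 2)` by its
maximum `B` on `[u, t]` and each exponential integral by `∫_x^∞ e^(-Cy) dy = e^(-Cx)/C` gives
`N(u) ≤ (B / C)^3 e^(-Cu)`, so the exponentials cancel. For `c ≤ 2` we have `B = u^(c-2)` and are left
with `∫ u^(4c-7) du`, whose behaviour changes at `4c - 7 = -1`, i.e. at `c = 3/2`; for `c ≥ 2`,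
`B = t^(c-2)` and the remaining integral is at most `t^(4c-6)`.
-/

/-- The quantity `I₈(t)` from Lemma 5.6: a fourfold iterated integral over the
ordered region `t* ≤ u ≤ s ≤ w ≤ r ≤ t`, scaled by `t^{-4c}`. -/
noncomputable def I8 (c Cstar tstar t : ℝ) : ℝ :=
  t ^ (-(4 * c)) *
    ∫ u in tstar..t, ∫ s in u..t, ∫ w in s..t, ∫ r in w..t,
      r ^ (c - 2) * u ^ (c - 1) * w ^ (c - 2) * s ^ (c - 2) *
        Real.exp (-Cstar * r + Cstar * u)

open MeasureTheory Set Real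

theorem intervalIntegral.integral_mono_on_of_nonneg {f g : ℝ → ℝ} {a b : ℝ} (hab : a ≤ b)
    (hg : IntervalIntegrable g volume a b) (hf : ∀ x ∈ Icc a b, 0 ≤ f x)
    (h : ∀ x ∈ Icc a b, f x ≤ g x) : ∫ x in a..b, f x ≤ ∫ x in a..b, g x := by
  rw [intervalIntegral.integral_of_le hab, intervalIntegral.integral_of_le hab]
  exact setIntegral_mono_of_nonneg (fun x hx => hf x (Ioc_subset_Icc_self hx))
    (fun x hx => h x (Ioc_subset_Icc_self hx)) hg.1

theorem integral_exp_neg_mul_le {C : ℝ} (hC : 0 < C) (a b : ℝ) :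
    ∫ x in a..b, exp (-C * x) ≤ exp (-C * a) / C := by
  have hC' : -C ≠ 0 := neg_ne_zero.2 hC.ne'
  rw [intervalIntegral.integral_comp_mul_left (fun x => exp x) hC', integral_exp, smul_eq_mul,
    inv_neg, neg_mul, ← mul_neg, neg_sub, inv_mul_eq_div]
  gcongr
  exact sub_le_self _ (exp_pos _).le

theorem integral_rpow_le_of_lt_neg_one {a b p : ℝ} (ha : 0 < a) (hb : 0 < b) (hp : p < -1) :
    ∫ x in a..b, x ^ p ≤ a ^ (p + 1) / -(p + 1) := by
  rw [integral_rpow (Or.inr ⟨hp.ne, notMem_uIcc_of_lt ha hb⟩), ← neg_div_neg_eq, neg_sub]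
  have := rpow_nonneg hb.le (p + 1)
  have : 0 < -(p + 1) := by linarith
  gcongr
  linarith

theorem integral_rpow_le_of_neg_one_lt {a b p : ℝ} (ha : 0 ≤ a) (hp : -1 < p) :
    ∫ x in a..b, x ^ p ≤ b ^ (p + 1) / (p + 1) := by
  rw [integral_rpow (Or.inl hp)]
  have := rpow_nonneg ha (p + 1)
  have : 0 < p + 1 := by linarith
  gcongr
  linarith

theorem integral_rpow_neg_one {a b : ℝ} (ha : 0 < a) (hb : 0 < b) :
    ∫ x in a..b, x ^ (-1 : ℝ) = log (b / a) := by
  simp only [rpow_neg_one]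
  exact integral_inv_of_pos ha hb

theorem rpow_neg_mul_rpow_sub_natCast {t : ℝ} (ht : 0 < t) (a : ℝ) (n : ℕ) :
    t ^ (-a) * t ^ (a - n) = 1 / t ^ n := by
  rw [← rpow_add ht, show -a + (a - n) = -(n : ℝ) by ring, rpow_neg ht.le, rpow_natCast, one_div]

/-- `expNested g C t n x = ∫_{x ≤ y₁ ≤ ⋯ ≤ yₙ ≤ t} g y₁ ⋯ g yₙ e^(-C yₙ)`. -/
noncomputable def expNested (g : ℝ → ℝ) (C t : ℝ) : ℕ → ℝ → ℝ
  | 0, x => exp (-C * x)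
  | n + 1, x => ∫ y in x..t, g y * expNested g C t n y

section expNested

variable {g : ℝ → ℝ} {C t : ℝ}

theorem expNested_nonneg {x : ℝ} (hxt : x ≤ t) (hg : ∀ y ∈ Icc x t, 0 ≤ g y) (n : ℕ) :
    0 ≤ expNested g C t n x := by
  induction n generalizing x with
  | zero => exact (exp_pos _).le
  | succ n ih =>
    exact intervalIntegral.integral_nonneg hxt fun y hy =>
      mul_nonneg (hg y hy) (ih hy.2 fun z hz => hg z ⟨hy.1.trans hz.1, hz.2⟩)

theorem expNested_le (hC : 0 < C) {x B : ℝ} (hxt : x ≤ t)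
    (hg : ∀ y ∈ Icc x t, 0 ≤ g y ∧ g y ≤ B) (n : ℕ) :
    expNested g C t n x ≤ (B / C) ^ n * exp (-C * x) := by
  induction n generalizing x with
  | zero => simp [expNested]
  | succ n ih =>
    have hB : 0 ≤ B := (hg x ⟨le_rfl, hxt⟩).1.trans (hg x ⟨le_rfl, hxt⟩).2
    have hterm : ∀ y ∈ Icc x t, 0 ≤ g y * expNested g C t n y ∧
        g y * expNested g C t n y ≤ B * (B / C) ^ n * exp (-C * y) := fun y hy => by
      have hgy : ∀ z ∈ Icc y t, 0 ≤ g z ∧ g z ≤ B := fun z hz => hg z ⟨hy.1.trans hz.1, hz.2⟩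
      have hN := expNested_nonneg (C := C) hy.2 (fun z hz => (hgy z hz).1) n
      refine ⟨mul_nonneg (hg y hy).1 hN, ?_⟩
      rw [mul_assoc]
      exact mul_le_mul (hg y hy).2 (ih hy.2 hgy) hN hB
    calc expNested g C t (n + 1) x = ∫ y in x..t, g y * expNested g C t n y := rfl
      _ ≤ ∫ y in x..t, B * (B / C) ^ n * exp (-C * y) :=
        intervalIntegral.integral_mono_on_of_nonneg hxt
          ((by fun_prop : Continuous fun y => B * (B / C) ^ n * exp (-C * y)).intervalIntegrable _ _)
          (fun y hy => (hterm y hy).1) (fun y hy => (hterm y hy).2)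
      _ = B * (B / C) ^ n * ∫ y in x..t, exp (-C * y) := intervalIntegral.integral_const_mul _ _
      _ ≤ B * (B / C) ^ n * (exp (-C * x) / C) := by
        gcongr
        exact integral_exp_neg_mul_le hC x t
      _ = (B / C) ^ (n + 1) * exp (-C * x) := by ring

end expNested

theorem I8_eq (c C tstar t : ℝ) :
    I8 c C tstar t = t ^ (-(4 * c)) *
      ∫ u in tstar..t, u ^ (c - 1) * exp (C * u) * expNested (· ^ (c - 2)) C t 3 u := by
  simp only [I8, expNested, ← intervalIntegral.integral_const_mul]
  congr! 8 with u s w r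
  rw [exp_add]
  ring

section I8

variable {c C tstar t : ℝ}

theorem rpow_mul_exp_mul_expNested_le (hC : 0 < C) {u B : ℝ} (hu : 0 < u) (hut : u ≤ t)
    (hB : ∀ y ∈ Icc u t, y ^ (c - 2) ≤ B) :
    u ^ (c - 1) * exp (C * u) * expNested (· ^ (c - 2)) C t 3 u ≤ u ^ (c - 1) * (B / C) ^ 3 := by
  have hN := expNested_le hC hut (fun y hy => ⟨rpow_nonneg (hu.le.trans hy.1) _, hB y hy⟩) 3
  calc u ^ (c - 1) * exp (C * u) * expNested (· ^ (c - 2)) C t 3 u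
      ≤ u ^ (c - 1) * exp (C * u) * ((B / C) ^ 3 * exp (-C * u)) := by gcongr
    _ = u ^ (c - 1) * (B / C) ^ 3 * (exp (C * u) * exp (-C * u)) := by ring
    _ = u ^ (c - 1) * (B / C) ^ 3 := by
      rw [← exp_add, neg_mul, add_neg_cancel, exp_zero, mul_one]

theorem rpow_mul_exp_mul_expNested_nonneg {u : ℝ} (hu : 0 ≤ u) (hut : u ≤ t) :
    0 ≤ u ^ (c - 1) * exp (C * u) * expNested (· ^ (c - 2)) C t 3 u :=
  mul_nonneg (by positivity)
    (expNested_nonneg hut (fun y hy => rpow_nonneg (hu.trans hy.1) _) 3)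

theorem I8_le_of_le_two (hC : 0 < C) (hc : c ≤ 2) (h0 : 0 < tstar) (ht : tstar ≤ t) :
    I8 c C tstar t ≤ t ^ (-(4 * c)) * ((∫ u in tstar..t, u ^ (4 * c - 7)) / C ^ 3) := by
  rw [I8_eq, ← intervalIntegral.integral_div]
  refine mul_le_mul_of_nonneg_left ?_ (rpow_nonneg (h0.le.trans ht) _)
  refine intervalIntegral.integral_mono_on_of_nonneg ht
    ((intervalIntegral.intervalIntegrable_rpow
      (Or.inr (notMem_uIcc_of_lt h0 (h0.trans_le ht)))).div_const _)
    (fun u hu => rpow_mul_exp_mul_expNested_nonneg (h0.le.trans hu.1) hu.2) (fun u hu => ?_)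
  have hu0 : 0 < u := h0.trans_le hu.1
  calc u ^ (c - 1) * exp (C * u) * expNested (· ^ (c - 2)) C t 3 u
      ≤ u ^ (c - 1) * (u ^ (c - 2) / C) ^ 3 :=
        rpow_mul_exp_mul_expNested_le hC hu0 hu.2 fun y hy =>
          rpow_le_rpow_of_nonpos hu0 hy.1 (by linarith)
    _ = u ^ (4 * c - 7) / C ^ 3 := by
      rw [div_pow, ← rpow_natCast, ← rpow_mul hu0.le, mul_div_assoc', ← rpow_add hu0]
      ring_nf

theorem I8_le_of_two_le (hC : 0 < C) (hc : 2 ≤ c) (h0 : 0 < tstar) (ht : tstar ≤ t) :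
    I8 c C tstar t ≤ 1 / C ^ 3 / t ^ 6 := by
  have ht0 : 0 < t := h0.trans_le ht
  have hbound : ∀ u ∈ Icc tstar t,
      u ^ (c - 1) * exp (C * u) * expNested (· ^ (c - 2)) C t 3 u ≤ t ^ (4 * c - 7) / C ^ 3 := by
    intro u hu
    have hu0 : 0 < u := h0.trans_le hu.1
    calc u ^ (c - 1) * exp (C * u) * expNested (· ^ (c - 2)) C t 3 u
        ≤ u ^ (c - 1) * (t ^ (c - 2) / C) ^ 3 :=
          rpow_mul_exp_mul_expNested_le hC hu0 hu.2 fun y hy =>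
            rpow_le_rpow (hu0.le.trans hy.1) hy.2 (by linarith)
      _ ≤ t ^ (c - 1) * (t ^ (c - 2) / C) ^ 3 := by
          gcongr
          · linarith
          · exact hu.2
      _ = t ^ (4 * c - 7) / C ^ 3 := by
        rw [div_pow, ← rpow_natCast, ← rpow_mul ht0.le, mul_div_assoc', ← rpow_add ht0]
        ring_nf
  have h6 := rpow_neg_mul_rpow_sub_natCast ht0 (4 * c) 6
  push_cast at h6
  calc I8 c C tstar t ≤ t ^ (-(4 * c)) * ∫ _ in tstar..t, t ^ (4 * c - 7) / C ^ 3 := by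
        rw [I8_eq]
        refine mul_le_mul_of_nonneg_left ?_ (by positivity)
        exact intervalIntegral.integral_mono_on_of_nonneg ht intervalIntegrable_const
          (fun u hu => rpow_mul_exp_mul_expNested_nonneg (h0.le.trans hu.1) hu.2) hbound
    _ = t ^ (-(4 * c)) * ((t - tstar) * (t ^ (4 * c - 7) / C ^ 3)) := by
      rw [intervalIntegral.integral_const, smul_eq_mul]
    _ ≤ t ^ (-(4 * c)) * (t * (t ^ (4 * c - 7) / C ^ 3)) := by
      gcongr
      linarith
    _ = t ^ (-(4 * c)) * t ^ (4 * c - 6) / C ^ 3 := by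
      rw [show 4 * c - 6 = 4 * c - 7 + 1 by ring, rpow_add_one ht0.ne']
      ring
    _ = 1 / C ^ 3 / t ^ 6 := by
      rw [h6]
      ring

theorem I8_le_of_lt_three_halves (hC : 0 < C) (hc : c < 3 / 2) (h0 : 0 < tstar)
    (ht : tstar ≤ t) :
    I8 c C tstar t ≤ tstar ^ (4 * c - 6) / (6 - 4 * c) / C ^ 3 / t ^ (4 * c) := by
  have ht0 : 0 < t := h0.trans_le ht
  have hint := integral_rpow_le_of_lt_neg_one h0 ht0 (show 4 * c - 7 < -1 by linarith)
  rw [show 4 * c - 7 + 1 = 4 * c - 6 by ring, show -(4 * c - 6) = 6 - 4 * c by ring] at hint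
  calc I8 c C tstar t ≤ t ^ (-(4 * c)) * ((∫ u in tstar..t, u ^ (4 * c - 7)) / C ^ 3) :=
        I8_le_of_le_two hC (by linarith) h0 ht
    _ ≤ t ^ (-(4 * c)) * (tstar ^ (4 * c - 6) / (6 - 4 * c) / C ^ 3) := by gcongr
    _ = _ := by
      rw [rpow_neg ht0.le]
      ring

theorem I8_three_halves_le (hC : 0 < C) (h1 : 1 ≤ tstar) (ht : tstar ≤ t) :
    I8 (3 / 2) C tstar t ≤ log t / C ^ 3 / t ^ 6 := by
  have h0 : 0 < tstar := by linarith
  have ht0 : 0 < t := h0.trans_le ht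
  have h := I8_le_of_le_two (c := 3 / 2) hC (by norm_num) h0 ht
  rw [show 4 * (3 / 2 : ℝ) - 7 = -1 by norm_num, integral_rpow_neg_one h0 ht0,
    show -(4 * (3 / 2 : ℝ)) = -((6 : ℕ) : ℝ) by norm_num, rpow_neg ht0.le, rpow_natCast] at h
  calc I8 (3 / 2) C tstar t ≤ (t ^ 6)⁻¹ * (log (t / tstar) / C ^ 3) := h
    _ ≤ (t ^ 6)⁻¹ * (log t / C ^ 3) := by
      gcongr
      exact div_le_self ht0.le h1
    _ = _ := by ring

theorem I8_le_of_three_halves_lt (hC : 0 < C) (hc : 3 / 2 < c) (h0 : 0 < tstar)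
    (ht : tstar ≤ t) :
    I8 c C tstar t ≤ max (1 / (4 * c - 6)) 1 / C ^ 3 / t ^ 6 := by
  have ht0 : 0 < t := h0.trans_le ht
  rcases le_total c 2 with hc2 | hc2
  · have hint := integral_rpow_le_of_neg_one_lt (b := t) h0.le
      (show -1 < 4 * c - 7 by linarith)
    rw [show 4 * c - 7 + 1 = 4 * c - 6 by ring] at hint
    have h6 := rpow_neg_mul_rpow_sub_natCast ht0 (4 * c) 6
    push_cast at h6
    calc I8 c C tstar t ≤ t ^ (-(4 * c)) * ((∫ u in tstar..t, u ^ (4 * c - 7)) / C ^ 3) :=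
          I8_le_of_le_two hC hc2 h0 ht
      _ ≤ t ^ (-(4 * c)) * (t ^ (4 * c - 6) / (4 * c - 6) / C ^ 3) := by gcongr
      _ = 1 / (4 * c - 6) / C ^ 3 / t ^ 6 := by
        rw [← mul_div_assoc, ← mul_div_assoc, h6]
        ring
      _ ≤ _ := by gcongr; exact le_max_left _ _
  · calc I8 c C tstar t ≤ 1 / C ^ 3 / t ^ 6 := I8_le_of_two_le hC hc2 h0 ht
      _ ≤ _ := by gcongr; exact le_max_right _ _

end I8

theorem stmt_4_general (c Cstar tstar : ℝ) (hC : 0 < Cstar)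
    (htstar : 1 ≤ tstar) :
    ∃ K : ℝ, 0 < K ∧ ∀ t : ℝ, tstar ≤ t →
      (3 / 2 < c → I8 c Cstar tstar t ≤ K / t ^ 6) ∧
      (c = 3 / 2 → I8 c Cstar tstar t ≤ K * (1 + Real.log t) / t ^ 6) ∧
      (c < 3 / 2 → I8 c Cstar tstar t ≤ K / t ^ (4 * c)) := by
  have h0 : 0 < tstar := by linarith
  rcases lt_trichotomy c (3 / 2) with hc | rfl | hc
  · have : 0 < 6 - 4 * c := by linarith
    exact ⟨tstar ^ (4 * c - 6) / (6 - 4 * c) / Cstar ^ 3, by positivity, fun t ht =>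
      ⟨fun h => by linarith, fun h => by linarith, fun _ => I8_le_of_lt_three_halves hC hc h0 ht⟩⟩
  · refine ⟨1 / Cstar ^ 3, by positivity, fun t ht =>
      ⟨fun h => by norm_num at h, fun _ => ?_, fun h => by norm_num at h⟩⟩
    calc I8 (3 / 2) Cstar tstar t ≤ log t / Cstar ^ 3 / t ^ 6 := I8_three_halves_le hC htstar ht
      _ = 1 / Cstar ^ 3 * log t / t ^ 6 := by ring
      _ ≤ 1 / Cstar ^ 3 * (1 + log t) / t ^ 6 := by gcongr; linarith
  · exact ⟨max (1 / (4 * c - 6)) 1 / Cstar ^ 3, by positivity, fun t ht =>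
      ⟨fun _ => I8_le_of_three_halves_lt hC hc h0 ht, fun h => by linarith, fun h => by linarith⟩⟩

/-- Lemma 5.6 of the paper. -/
theorem stmt_4 (c Cstar tstar : ℝ) (hc : 1 / 2 < c) (hC : 0 < Cstar)
    (htstar : 1 ≤ tstar) :
    ∃ K : ℝ, 0 < K ∧ ∀ t : ℝ, tstar ≤ t →
      (3 / 2 < c → I8 c Cstar tstar t ≤ K / t ^ 6) ∧
      (c = 3 / 2 → I8 c Cstar tstar t ≤ K * (1 + Real.log t) / t ^ 6) ∧
      (c < 3 / 2 → I8 c Cstar tstar t ≤ K / t ^ (4 * c)) :=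
  stmt_4_general c Cstar tstar hC htstar
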